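/- For all natural numbers x and y, if a x y holds then x = y. (This is the semantic content of the paper's example sequent a x y ⊢ eqe x y, eqo x y, since eqe x y or eqo x y holds exactly when x = y.) -/
import Mathlib


mutual
  inductive A : ℕ → ℕ → Prop
    | zero : A 0 0
    | of_b : ∀ x y, B x y → A x (y + 1)
    | of_c : ∀ x y, C x y → A (x + 1) y
  inductive B : ℕ → ℕ → Prop
    | of_a : ∀ x y, A x y → B (x + 1) y
    | of_c : ∀ x y, C x y → B (x + 1 + 1) y
  inductive C : ℕ → ℕ → Prop
    | of_a : ∀ x y, A x y → C x (y + 1)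
    | of_b : ∀ x y, B x y → C x (y + 1 + 1)
end

theorem a_eq (x y : ℕ) (h : A x y) : x = y := by
  refine A.rec (motive_1 := fun x y _ => x = y)
    (motive_2 := fun x y _ => x = y + 1) (motive_3 := fun x y _ => y = x + 1)
    ?_ ?_ ?_ ?_ ?_ ?_ ?_ h <;> intros <;> omega
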